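/- arXiv:1905.07201 — 6 statements merged into one kernel-verified Lean document; each statement's English description precedes it below -/
import Mathlib

section
/- Let $0 < p, q \le 1$, let $X$ be a $p$-normed space and $Y$ a $q$-normed space. Let $\Gamma$ be a set, and for each $\gamma \in \Gamma$ let $f_\gamma : X \to Y$ be an $L$-Lipschitz map. Suppose that the sets $\operatorname{supp}_0(f_\gamma) = f_\gamma^{-1}(Y \setminus \{0\})$ are pairwise disjoint. Then the map $f = \sum_{\gamma \in \Gamma} f_\gamma$ (which is pointwise a finite sum) is well-defined and $L \cdot 2^{1/q - 1}$-Lipschitz. -/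
/-!
Write `d = ‖x - x'‖`. If one index `γ` carries both `x` and `x'`, the bound is the Lipschitz
bound for `f γ`. Otherwise `f γ x = a ≠ 0` and `f γ' x' = b ≠ 0` with `γ ≠ γ'`, and we look at the
point `z` of the segment `[x, x']` with `‖x - z‖ = ‖a‖ / (‖a‖ + ‖b‖) · d`, which cuts it in the ratio
`‖a‖ : ‖b‖`. One of `f γ`, `f γ'` vanishes at `z`; the Lipschitz bound from `z` to `x` (resp. `x'`)
then gives `‖a‖ + ‖b‖ ≤ L d`, and the quasi-triangle inequality
`‖a - b‖ ≤ 2^{1/q-1} (‖a‖ + ‖b‖)` of the `q`-norm finishes the proof.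
-/

open Real

lemma rpow_add_rpow_rpow_one_div_le {q : ℝ} (hq : 0 < q) (hq1 : q ≤ 1) {A B : ℝ}
    (hA : 0 ≤ A) (hB : 0 ≤ B) :
    (A ^ q + B ^ q) ^ (1 / q) ≤ 2 ^ (1 / q - 1) * (A + B) := by
  lift A to NNReal using hA
  lift B to NNReal using hB
  have h := NNReal.rpow_add_le_mul_rpow_add_rpow (A ^ q) (B ^ q) (one_le_one_div hq hq1)
  rw [← NNReal.rpow_mul A, ← NNReal.rpow_mul B, mul_one_div_cancel hq.ne', NNReal.rpow_one,
    NNReal.rpow_one] at h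
  exact_mod_cast h

lemma one_le_two_rpow_one_div_sub_one {q : ℝ} (hq : 0 < q) (hq1 : q ≤ 1) :
    (1 : ℝ) ≤ 2 ^ (1 / q - 1) :=
  one_le_rpow one_le_two (by linarith [one_le_one_div hq hq1])

section QuasiNorm

variable {E : Type*} [AddCommGroup E] [Module ℝ E]

lemma apply_neg_of_abs_homogeneous {n : E → ℝ} (hhom : ∀ (c : ℝ) v, n (c • v) = |c| * n v)
    (v : E) : n (-v) = n v := by
  simpa using hhom (-1) v

lemma apply_sub_comm_of_abs_homogeneous {n : E → ℝ} (hhom : ∀ (c : ℝ) v, n (c • v) = |c| * n v)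
    (v w : E) : n (v - w) = n (w - v) := by
  rw [← neg_sub, apply_neg_of_abs_homogeneous hhom]

lemma sub_le_two_rpow_mul_add_of_rpow_triangle {q : ℝ} (hq : 0 < q) (hq1 : q ≤ 1)
    {n : E → ℝ} (hnn : ∀ v, 0 ≤ n v) (hhom : ∀ (c : ℝ) v, n (c • v) = |c| * n v)
    (htri : ∀ v w, n (v + w) ^ q ≤ n v ^ q + n w ^ q) (v w : E) :
    n (v - w) ≤ 2 ^ (1 / q - 1) * (n v + n w) := by
  have hq_tri : n (v - w) ^ q ≤ n v ^ q + n w ^ q := by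
    simpa [sub_eq_add_neg, apply_neg_of_abs_homogeneous hhom] using htri v (-w)
  calc n (v - w) = (n (v - w) ^ q) ^ (1 / q) := by
        rw [← rpow_mul (hnn _), mul_one_div_cancel hq.ne', rpow_one]
    _ ≤ (n v ^ q + n w ^ q) ^ (1 / q) :=
        rpow_le_rpow (rpow_nonneg (hnn _) _) hq_tri (by positivity)
    _ ≤ 2 ^ (1 / q - 1) * (n v + n w) := rpow_add_rpow_rpow_one_div_le hq hq1 (hnn v) (hnn w)

end QuasiNorm

lemma add_le_of_le_mul_div_add {a b K : ℝ} (ha : 0 < a) (hb : 0 ≤ b)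
    (h : a ≤ K * (a / (a + b))) : a + b ≤ K := by
  rw [mul_div_assoc', le_div_iff₀ (by positivity)] at h
  nlinarith

lemma add_le_of_disjoint_zeros {X Y : Type*} [AddCommGroup X] [Module ℝ X] [AddCommGroup Y]
    {nX : X → ℝ} (hXhom : ∀ (c : ℝ) v, nX (c • v) = |c| * nX v)
    {nY : Y → ℝ} (hYnn : ∀ v, 0 ≤ nY v) (hYeq : ∀ v, nY v = 0 ↔ v = 0) {g h : X → Y} {L : ℝ}
    (hg : ∀ x x', nY (g x - g x') ≤ L * nX (x - x'))
    (hh : ∀ x x', nY (h x - h x') ≤ L * nX (x - x'))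
    (hdisj : ∀ z, g z = 0 ∨ h z = 0) {x x' : X} (hgx : g x ≠ 0) (hhx' : h x' ≠ 0) :
    nY (g x) + nY (h x') ≤ L * nX (x - x') := by
  set a := nY (g x)
  set b := nY (h x')
  have ha : 0 < a := (hYnn _).lt_of_ne' (mt (hYeq _).mp hgx)
  have hb : 0 < b := (hYnn _).lt_of_ne' (mt (hYeq _).mp hhx')
  set t := a / (a + b)
  have ht0 : 0 ≤ t := by positivity
  have h1t : 1 - t = b / (b + a) := by
    simp only [t]
    field_simp
    ring
  have ht1 : 0 ≤ 1 - t := h1t ▸ by positivity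
  set d := nX (x' - x)
  set z := x + t • (x' - x)
  have hxz : nX (x - z) = t * d := by
    rw [show x - z = (-t) • (x' - x) by simp [z, neg_smul], hXhom, abs_neg, abs_of_nonneg ht0]
  have hx'z : nX (x' - z) = (1 - t) * d := by
    rw [show x' - z = (1 - t) • (x' - x) by simp only [z, sub_smul, one_smul]; abel, hXhom,
      abs_of_nonneg ht1]
  rw [apply_sub_comm_of_abs_homogeneous hXhom]
  rcases hdisj z with hgz | hhz
  · have hgxz := hg x z
    rw [hgz, sub_zero, hxz] at hgxz
    exact add_le_of_le_mul_div_add ha hb.le (hgxz.trans_eq (by ring))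
  · have hhx'z := hh x' z
    rw [hhz, sub_zero, hx'z, h1t] at hhx'z
    rw [add_comm]
    exact add_le_of_le_mul_div_add hb ha.le (hhx'z.trans_eq (by ring))

lemma finsum_eq_of_ne_zero {Γ X M : Type*} [AddCommMonoid M] {f : Γ → X → M}
    (hdisj : ∀ γ γ', γ ≠ γ' → ∀ x, f γ x = 0 ∨ f γ' x = 0) {x : X} {γ : Γ} (hγ : f γ x ≠ 0) :
    ∑ᶠ γ', f γ' x = f γ x :=
  finsum_eq_single _ γ fun _ hne => (hdisj _ _ hne x).resolve_right hγ

lemma finsum_sub_finsum_le_of_disjoint_zeros {q : ℝ} (hq : 0 < q) (hq1 : q ≤ 1)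
    {X Y Γ : Type*} [AddCommGroup X] [Module ℝ X] [AddCommGroup Y] [Module ℝ Y]
    {nX : X → ℝ} (hXnn : ∀ v, 0 ≤ nX v) (hXhom : ∀ (c : ℝ) v, nX (c • v) = |c| * nX v)
    {nY : Y → ℝ} (hYnn : ∀ v, 0 ≤ nY v) (hYeq : ∀ v, nY v = 0 ↔ v = 0)
    (hYhom : ∀ (c : ℝ) v, nY (c • v) = |c| * nY v)
    (hYtri : ∀ v w, nY (v + w) ^ q ≤ nY v ^ q + nY w ^ q)
    {f : Γ → X → Y} {L : ℝ} (hL : 0 ≤ L)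
    (hLip : ∀ γ x x', nY (f γ x - f γ x') ≤ L * nX (x - x'))
    (hdisj : ∀ γ γ', γ ≠ γ' → ∀ x, f γ x = 0 ∨ f γ' x = 0) (x x' : X) :
    nY (∑ᶠ γ, f γ x - ∑ᶠ γ, f γ x') ≤ L * 2 ^ (1 / q - 1) * nX (x - x') := by
  have hLipC : ∀ γ, nY (f γ x - f γ x') ≤ L * 2 ^ (1 / q - 1) * nX (x - x') := fun γ =>
    (hLip γ x x').trans <| by
      rw [mul_right_comm]
      exact le_mul_of_one_le_right (mul_nonneg hL (hXnn _)) (one_le_two_rpow_one_div_sub_one hq hq1)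
  by_cases hx : ∃ γ, f γ x ≠ 0 <;> by_cases hx' : ∃ γ, f γ x' ≠ 0
  · obtain ⟨γ, hγ⟩ := hx
    obtain ⟨γ', hγ'⟩ := hx'
    rw [finsum_eq_of_ne_zero hdisj hγ, finsum_eq_of_ne_zero hdisj hγ']
    obtain rfl | hne := eq_or_ne γ γ'
    · exact hLipC γ
    calc nY (f γ x - f γ' x') ≤ 2 ^ (1 / q - 1) * (nY (f γ x) + nY (f γ' x')) :=
          sub_le_two_rpow_mul_add_of_rpow_triangle hq hq1 hYnn hYhom hYtri _ _
      _ ≤ 2 ^ (1 / q - 1) * (L * nX (x - x')) := by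
          gcongr
          exact add_le_of_disjoint_zeros hXhom hYnn hYeq (hLip γ) (hLip γ') (hdisj γ γ' hne) hγ hγ'
      _ = L * 2 ^ (1 / q - 1) * nX (x - x') := by ring
  · obtain ⟨γ, hγ⟩ := hx
    push Not at hx'
    simpa [finsum_eq_of_ne_zero hdisj hγ, hx'] using hLipC γ
  · obtain ⟨γ', hγ'⟩ := hx'
    push Not at hx
    simpa [finsum_eq_of_ne_zero hdisj hγ', hx] using hLipC γ'
  · push Not at hx hx'
    simp only [hx, hx', finsum_zero, sub_self, (hYeq 0).mpr rfl]
    exact mul_nonneg (mul_nonneg hL (by positivity)) (hXnn _)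

theorem stmt_3_general
    (q : ℝ) (hq : 0 < q) (hq1 : q ≤ 1)
    (X : Type*) [AddCommGroup X] [Module ℝ X]
    (nX : X → ℝ)
    (hXnn : ∀ v, 0 ≤ nX v)
    (hXhom : ∀ (c : ℝ) v, nX (c • v) = |c| * nX v)
    (Y : Type*) [AddCommGroup Y] [Module ℝ Y]
    (nY : Y → ℝ)
    (hYnn : ∀ v, 0 ≤ nY v)
    (hYeq : ∀ v, nY v = 0 ↔ v = 0)
    (hYhom : ∀ (c : ℝ) v, nY (c • v) = |c| * nY v)
    (hYtri : ∀ v w, nY (v + w) ^ q ≤ nY v ^ q + nY w ^ q)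
    (Γ : Type*) (f : Γ → X → Y) (L : ℝ) (hL : 0 ≤ L)
    (hLip : ∀ γ x x', nY (f γ x - f γ x') ≤ L * nX (x - x'))
    (hdisj : ∀ γ γ', γ ≠ γ' → ∀ x, f γ x = 0 ∨ f γ' x = 0) :
    ∃ F : X → Y,
      (∀ x γ, f γ x ≠ 0 → F x = f γ x) ∧
      (∀ x, (∀ γ, f γ x = 0) → F x = 0) ∧
      (∀ x x', nY (F x - F x') ≤ L * (2 : ℝ) ^ (1 / q - 1) * nX (x - x')) :=
  ⟨fun x => ∑ᶠ γ, f γ x, fun _ _ hγ => finsum_eq_of_ne_zero hdisj hγ,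
    fun _ h => by simp only [h, finsum_zero],
    finsum_sub_finsum_le_of_disjoint_zeros hq hq1 hXnn hXhom hYnn hYeq hYhom hYtri hL hLip hdisj⟩

/-- A pointwise sum of `L`-Lipschitz maps with pairwise disjoint supports from a
`p`-normed space into a `q`-normed space is well defined and `L·2^{1/q-1}`-Lipschitz. -/
theorem stmt_3
    (p q : ℝ) (hp : 0 < p) (hp1 : p ≤ 1) (hq : 0 < q) (hq1 : q ≤ 1)
    (X : Type*) [AddCommGroup X] [Module ℝ X]
    (nX : X → ℝ)
    (hXnn : ∀ v, 0 ≤ nX v)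
    (hXeq : ∀ v, nX v = 0 ↔ v = 0)
    (hXhom : ∀ (c : ℝ) v, nX (c • v) = |c| * nX v)
    (hXtri : ∀ v w, nX (v + w) ^ p ≤ nX v ^ p + nX w ^ p)
    (Y : Type*) [AddCommGroup Y] [Module ℝ Y]
    (nY : Y → ℝ)
    (hYnn : ∀ v, 0 ≤ nY v)
    (hYeq : ∀ v, nY v = 0 ↔ v = 0)
    (hYhom : ∀ (c : ℝ) v, nY (c • v) = |c| * nY v)
    (hYtri : ∀ v w, nY (v + w) ^ q ≤ nY v ^ q + nY w ^ q)
    (Γ : Type*) (f : Γ → X → Y) (L : ℝ) (hL : 0 ≤ L)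
    (hLip : ∀ γ x x', nY (f γ x - f γ x') ≤ L * nX (x - x'))
    (hdisj : ∀ γ γ', γ ≠ γ' → ∀ x, f γ x = 0 ∨ f γ' x = 0) :
    ∃ F : X → Y,
      (∀ x γ, f γ x ≠ 0 → F x = f γ x) ∧
      (∀ x, (∀ γ, f γ x = 0) → F x = 0) ∧
      (∀ x x', nY (F x - F x') ≤ L * (2 : ℝ) ^ (1 / q - 1) * nX (x - x')) :=
  stmt_3_general q hq hq1 X nX hXnn hXhom Y nY hYnn hYeq hYhom hYtri Γ f L hL hLip hdisj
end

section
/- Let $0 < p \le 1$ and let $(\mathcal{M}, d)$ be a $p$-metric space such that either $\mathcal{M}$ is unbounded or its completion contains a limit point (a non-isolated point). Then for every $t > 1$ there exist a sequence $(x_n)_{n \ge 1}$ in $\mathcal{M}$, a point $x_0$ in the completion of $\mathcal{M}$, and a monotone sequence $(r_n)_{n \ge 1}$ of positive reals such that, setting $r_0 = 0$, for all distinct $m, n \in \mathbb{N} \cup \{0\}$: $d^p(x_n, x_m) \ge r_n + r_m$ and $|r_n - r_m| / d^p(x_n, x_m) \ge 1/t$. -/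
open Filter Topology UniformSpace

/-
With `s = √t`, base point `x₀` and `ρₙ = d^p(xₙ, x₀)`, take `rₙ = ρₙ / s`. The triangle inequality
gives `|ρₘ - ρₙ| ≤ d^p(xₘ, xₙ) ≤ ρₘ + ρₙ`, so both required inequalities hold, each losing one
factor `s`, as soon as `ρₘ + ρₙ ≤ s |ρₘ - ρₙ|` for all `m ≠ n`. That is the case when consecutive
distances grow, or shrink, by the factor `(s + 1) / (s - 1)`, and such a sequence is chosen
greedily: running off to infinity if `𝓜` is unbounded, converging to the limit point otherwise.
-/

/-- `b` exceeds `a ≥ 0` by more than the factor `(s + 1) / (s - 1)`, written without division. -/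
def Lacunary (s a b : ℝ) : Prop := 0 ≤ a ∧ a + b < s * (b - a)

namespace Lacunary

variable {s a b c : ℝ}

theorem trans (hab : Lacunary s a b) (hbc : Lacunary s b c) : Lacunary s a c :=
  ⟨hab.1, by linarith [hab.2, hbc.2, hbc.1]⟩

instance : IsTrans ℝ (Lacunary s) := ⟨fun _ _ _ => trans⟩

theorem of_mul_lt (hs : 1 < s) (ha : 0 ≤ a) (h : (s + 1) / (s - 1) * a < b) : Lacunary s a b := by
  refine ⟨ha, ?_⟩
  rw [div_mul_eq_mul_div, div_lt_iff₀ (by linarith)] at h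
  linarith

theorem lt (hs : 1 < s) (h : Lacunary s a b) : a < b := by
  by_contra! hba
  nlinarith [h.1, h.2, mul_nonneg (sub_nonneg.2 hs.le) (sub_nonneg.2 hba)]

theorem pos (hs : 1 < s) (h : Lacunary s a b) : 0 < b :=
  h.1.trans_lt (h.lt hs)

theorem add_le_mul_abs_sub (hs : 1 < s) (h : Lacunary s a b) : a + b ≤ s * |a - b| := by
  rw [abs_sub_comm, abs_of_pos (sub_pos.2 (h.lt hs))]
  exact h.2.le

end Lacunary

theorem div_add_div_le_and_inv_sq_le {s a b D : ℝ} (hs : 1 < s) (hab : 0 < a + b)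
    (hsep : a + b ≤ s * |a - b|) (hlow : |a - b| ≤ D) (hup : D ≤ a + b) :
    a / s + b / s ≤ D ∧ 1 / s ^ 2 ≤ |b / s - a / s| / D := by
  have hs0 : 0 < s := by linarith
  have habs : 0 < |a - b| := pos_of_mul_pos_right (hab.trans_le hsep) hs0.le
  have hD : 0 < D := habs.trans_le hlow
  constructor
  · rw [← add_div, div_le_iff₀ hs0]
    nlinarith
  · rw [← sub_div, abs_div, abs_of_pos hs0, abs_sub_comm, div_div, div_le_div_iff₀ (by positivity)
      (by positivity)]
    nlinarith

section Radii

variable {N : Type*} [PseudoMetricSpace N] {t : ℝ}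

theorem exists_radii_of_separated (ht : 1 < t) (z : N) (y : ℕ → N)
    (hpos : ∀ n, 1 ≤ n → 0 < dist (y n) z)
    (hmono : (∀ m n, 1 ≤ m → m ≤ n → dist (y m) z ≤ dist (y n) z) ∨
      ∀ m n, 1 ≤ m → m ≤ n → dist (y n) z ≤ dist (y m) z)
    (hsep : ∀ m n, 1 ≤ m → m < n →
      dist (y m) z + dist (y n) z ≤ √t * |dist (y m) z - dist (y n) z|) :
    ∃ r : ℕ → ℝ, r 0 = 0 ∧ (∀ n, 1 ≤ n → 0 < r n) ∧
      ((∀ m n, 1 ≤ m → m ≤ n → r m ≤ r n) ∨ (∀ m n, 1 ≤ m → m ≤ n → r n ≤ r m)) ∧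
      ∀ m n, m ≠ n →
        r m + r n ≤ dist (if m = 0 then z else y m) (if n = 0 then z else y n) ∧
        1 / t ≤ |r n - r m| / dist (if m = 0 then z else y m) (if n = 0 then z else y n) := by
  set Y : ℕ → N := fun n => if n = 0 then z else y n
  have hY : ∀ n, 1 ≤ n → dist (Y n) (Y 0) = dist (y n) z := fun n hn => by
    simp [Y, Nat.one_le_iff_ne_zero.1 hn]
  have hs : 1 < √t := by rwa [Real.lt_sqrt zero_le_one, one_pow]
  refine ⟨fun n => dist (Y n) (Y 0) / √t, by simp, fun n hn => ?_, ?_, fun m n hmn => ?_⟩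
  · dsimp only
    rw [hY n hn]
    exact div_pos (hpos n hn) (by positivity)
  · rcases hmono with h | h
    · refine .inl fun m n hm hmn => ?_
      simp only [hY m hm, hY n (hm.trans hmn)]
      gcongr
      exact h m n hm hmn
    · refine .inr fun m n hm hmn => ?_
      simp only [hY m hm, hY n (hm.trans hmn)]
      gcongr
      exact h m n hm hmn
  wlog hlt : m < n generalizing m n
  · obtain ⟨h₁, h₂⟩ := this n m hmn.symm (hmn.symm.lt_of_le (not_lt.1 hlt))
    rw [add_comm, dist_comm, abs_sub_comm]
    exact ⟨h₁, h₂⟩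
  have hsep' : dist (Y m) (Y 0) + dist (Y n) (Y 0) ≤
      √t * |dist (Y m) (Y 0) - dist (Y n) (Y 0)| := by
    rcases Nat.eq_zero_or_pos m with rfl | hm
    · simpa [abs_of_nonneg dist_nonneg] using le_mul_of_one_le_left dist_nonneg hs.le
    · rw [hY m hm, hY n (by omega)]
      exact hsep m n hm hlt
  simpa [Real.sq_sqrt (zero_le_one.trans ht.le)] using div_add_div_le_and_inv_sq_le hs
    (add_pos_of_nonneg_of_pos dist_nonneg ((hY n (by omega)).symm ▸ hpos n (by omega))) hsep'
    (abs_dist_sub_le (Y m) (Y n) (Y 0)) (dist_triangle_right (Y m) (Y n) (Y 0))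

theorem exists_radii_of_lacunary (ht : 1 < t) (z : N) (y : ℕ → N)
    (hpos : ∀ n, 1 ≤ n → 0 < dist (y n) z)
    (hlac : (∀ n, 1 ≤ n → Lacunary √t (dist (y n) z) (dist (y (n + 1)) z)) ∨
      ∀ n, 1 ≤ n → Lacunary √t (dist (y (n + 1)) z) (dist (y n) z)) :
    ∃ r : ℕ → ℝ, r 0 = 0 ∧ (∀ n, 1 ≤ n → 0 < r n) ∧
      ((∀ m n, 1 ≤ m → m ≤ n → r m ≤ r n) ∨ (∀ m n, 1 ≤ m → m ≤ n → r n ≤ r m)) ∧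
      ∀ m n, m ≠ n →
        r m + r n ≤ dist (if m = 0 then z else y m) (if n = 0 then z else y n) ∧
        1 / t ≤ |r n - r m| / dist (if m = 0 then z else y m) (if n = 0 then z else y n) := by
  have hs : 1 < √t := by rwa [Real.lt_sqrt zero_le_one, one_pow]
  rcases hlac with h | h
  · have hchain := Nat.rel_of_forall_rel_succ_of_le_of_lt _ (f := fun n => dist (y n) z) h
    refine exists_radii_of_separated ht z y hpos (.inl fun m n hm hmn => ?_)
      fun m n hm hmn => (hchain hm hmn).add_le_mul_abs_sub hs
    rcases hmn.eq_or_lt with rfl | hlt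
    exacts [le_rfl, (hchain hm hlt).lt hs |>.le]
  · have hchain := Nat.rel_of_forall_rel_succ_of_le_of_lt (Function.swap (Lacunary √t))
      (f := fun n => dist (y n) z) h
    refine exists_radii_of_separated ht z y hpos (.inr fun m n hm hmn => ?_)
      fun m n hm hmn => by
        rw [add_comm, abs_sub_comm]
        exact (hchain hm hmn).add_le_mul_abs_sub hs
    rcases hmn.eq_or_lt with rfl | hlt
    exacts [le_rfl, (hchain hm hlt).lt hs |>.le]

end Radii

theorem exists_seq_rel_succ {α : Type*} {R : α → α → Prop} (h : ∀ a, ∃ b, R a b) (a₀ : α) :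
    ∃ x : ℕ → α, x 0 = a₀ ∧ ∀ n, R (x n) (x (n + 1)) := by
  choose f hf using h
  exact ⟨fun n => f^[n] a₀, rfl, fun n => by simpa only [Function.iterate_succ_apply'] using hf _⟩

theorem not_isBounded_univ_of_dist_eq_rpow {M : Type*} [PseudoMetricSpace M] {p : ℝ} (hp : 0 < p)
    {d : M → M → ℝ} (hdist : ∀ x y, dist x y = d x y ^ p) (h : ∀ R, ∃ x y, R < d x y) :
    ¬Bornology.IsBounded (Set.univ : Set M) := by
  intro hbdd
  obtain ⟨C, hC⟩ := Metric.isBounded_iff.1 hbdd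
  obtain ⟨x, y, hxy⟩ := h (max C 0 ^ p⁻¹)
  refine (hC (Set.mem_univ x) (Set.mem_univ y)).not_gt ?_
  calc C ≤ max C 0 := le_max_left _ _
    _ = (max C 0 ^ p⁻¹) ^ p := (Real.rpow_inv_rpow (le_max_right _ _) hp.ne').symm
    _ < d x y ^ p := Real.rpow_lt_rpow (by positivity) hxy hp
    _ = dist x y := (hdist x y).symm

theorem exists_lt_dist_of_not_isBounded_univ {M : Type*} [PseudoMetricSpace M]
    (h : ¬Bornology.IsBounded (Set.univ : Set M)) (z : M) (R : ℝ) : ∃ w, R < dist w z := by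
  by_contra! hR
  exact h ((Metric.isBounded_iff_subset_closedBall z).2 ⟨R, fun w _ => hR w⟩)

theorem exists_lacunary_seq_of_not_isBounded_univ {M : Type*} [PseudoMetricSpace M] {s : ℝ}
    (hs : 1 < s) (h : ¬Bornology.IsBounded (Set.univ : Set M)) (z : M) :
    ∃ x : ℕ → M, x 0 = z ∧ ∀ n, Lacunary s (dist (x n) z) (dist (x (n + 1)) z) :=
  exists_seq_rel_succ (R := fun a b => Lacunary s (dist a z) (dist b z))
    (fun _ => (exists_lt_dist_of_not_isBounded_univ h z _).imp
      fun _ => Lacunary.of_mul_lt hs dist_nonneg) z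

theorem exists_lacunary_subseq_of_tendsto {N : Type*} [MetricSpace N] {s : ℝ} (hs : 1 < s)
    {x₀ : N} {y : ℕ → N} (hne : ∀ n, y n ≠ x₀) (hlim : Tendsto y atTop (𝓝 x₀)) :
    ∃ φ : ℕ → ℕ, ∀ n, Lacunary s (dist (y (φ (n + 1))) x₀) (dist (y (φ n)) x₀) := by
  have hsmall : Tendsto (fun k => (s + 1) / (s - 1) * dist (y k) x₀) atTop (𝓝 0) := by
    simpa using (tendsto_iff_dist_tendsto_zero.1 hlim).const_mul ((s + 1) / (s - 1))
  obtain ⟨φ, -, hφ⟩ := exists_seq_rel_succ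
    (R := fun i j => Lacunary s (dist (y j) x₀) (dist (y i) x₀))
    (fun i => (hsmall.eventually (gt_mem_nhds (dist_pos.2 (hne i)))).exists.imp
      fun _ => Lacunary.of_mul_lt hs dist_nonneg) 0
  exact ⟨φ, hφ⟩

theorem stmt_5_general
    (p : ℝ) (hp : 0 < p)
    (M : Type*) [MetricSpace M]
    (d : M → M → ℝ)
    (hdist : ∀ x y : M, dist x y = d x y ^ p)
    (hyp : (∀ R : ℝ, ∃ x y : M, R < d x y) ∨
      (∃ x₀ : Completion M, ∃ y : ℕ → M,
        (∀ n, (y n : Completion M) ≠ x₀) ∧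
        Tendsto (fun n => (y n : Completion M)) atTop (𝓝 x₀))) :
    ∀ t : ℝ, 1 < t →
      ∃ (x : ℕ → M) (x₀ : Completion M) (r : ℕ → ℝ),
        r 0 = 0 ∧ (∀ n, 1 ≤ n → 0 < r n) ∧
        ((∀ m n, 1 ≤ m → m ≤ n → r m ≤ r n) ∨ (∀ m n, 1 ≤ m → m ≤ n → r n ≤ r m)) ∧
        (∀ m n : ℕ, m ≠ n →
          r m + r n ≤ dist (if m = 0 then x₀ else (x m : Completion M))
              (if n = 0 then x₀ else (x n : Completion M)) ∧
          1 / t ≤ |r n - r m| /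
            dist (if m = 0 then x₀ else (x m : Completion M))
              (if n = 0 then x₀ else (x n : Completion M))) := by
  intro t ht
  have hs : 1 < √t := by rwa [Real.lt_sqrt zero_le_one, one_pow]
  rcases hyp with hunb | ⟨x₀, y, hne, hlim⟩
  · obtain ⟨z, -, -⟩ := hunb 0
    obtain ⟨x, -, hlac⟩ := exists_lacunary_seq_of_not_isBounded_univ hs
      (not_isBounded_univ_of_dist_eq_rpow hp hdist hunb) z
    refine ⟨x, z, exists_radii_of_lacunary ht _ _ (fun n hn => ?_) (.inl fun n _ => ?_)⟩
    · obtain ⟨k, rfl⟩ := Nat.exists_eq_add_of_le' hn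
      simpa only [Completion.dist_eq] using (hlac k).pos hs
    · simpa only [Completion.dist_eq] using hlac n
  · obtain ⟨φ, hφ⟩ := exists_lacunary_subseq_of_tendsto hs hne hlim
    exact ⟨y ∘ φ, x₀, exists_radii_of_lacunary ht _ _ (fun n _ => dist_pos.2 (hne _))
      (.inr fun n _ => hφ n)⟩

/-- If a `p`-metric space is unbounded or its completion has a limit point, then for each
`t > 1` there are points `(x_n)` and a monotone sequence `(r_n)` of positive reals
(with `r_0 = 0` and `x_0` in the completion) witnessing the separation conditions
`d^p(x_n, x_m) ≥ r_n + r_m` and `|r_n - r_m|/d^p(x_n, x_m) ≥ 1/t`. Here the metric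
(`dist`) is `d^p`, and it extends canonically to the completion. -/
theorem stmt_5
    (p : ℝ) (hp : 0 < p) (hp1 : p ≤ 1)
    (M : Type*) [MetricSpace M]
    (d : M → M → ℝ)
    (hnn : ∀ x y, 0 ≤ d x y)
    (hsymm : ∀ x y, d x y = d y x)
    (heq : ∀ x y, d x y = 0 ↔ x = y)
    (htri : ∀ x y z, d x z ^ p ≤ d x y ^ p + d y z ^ p)
    (hdist : ∀ x y : M, dist x y = d x y ^ p)
    (hyp : (∀ R : ℝ, ∃ x y : M, R < d x y) ∨
      (∃ x₀ : Completion M, ∃ y : ℕ → M,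
        (∀ n, (y n : Completion M) ≠ x₀) ∧
        Tendsto (fun n => (y n : Completion M)) atTop (𝓝 x₀))) :
    ∀ t : ℝ, 1 < t →
      ∃ (x : ℕ → M) (x₀ : Completion M) (r : ℕ → ℝ),
        r 0 = 0 ∧ (∀ n, 1 ≤ n → 0 < r n) ∧
        ((∀ m n, 1 ≤ m → m ≤ n → r m ≤ r n) ∨ (∀ m n, 1 ≤ m → m ≤ n → r n ≤ r m)) ∧
        (∀ m n : ℕ, m ≠ n →
          r m + r n ≤ dist (if m = 0 then x₀ else (x m : Completion M))
              (if n = 0 then x₀ else (x n : Completion M)) ∧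
          1 / t ≤ |r n - r m| /
            dist (if m = 0 then x₀ else (x m : Completion M))
              (if n = 0 then x₀ else (x n : Completion M))) :=
  stmt_5_general p hp M d hdist hyp
end

section
/- Let $0 < p \le 1$ and let $X$ be a $p$-Banach space containing a normalized basic sequence $(x_j)_{j=1}^\infty$ equivalent to the unit vector basis of $\ell_p$. Then for every $\epsilon > 0$ there is a normalized block basic sequence $(y_k)_{k=1}^\infty$ of $(x_j)$ such that $\|\sum_{k} a_k y_k\| \ge (1-\epsilon)(\sum_k |a_k|^p)^{1/p}$ for every finitely supported sequence of scalars $(a_k)$. -/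
/-!
Let `λ m` be the infimum of `n (∑_{m < j ≤ M} b_j x_j)` over coefficients with
`∑ |b_j|^p = 1`. The lower `ℓ_p`-estimate gives `c ≤ λ m ≤ 1`, and by homogeneity every vector
supported after `m` satisfies `n (∑ d_j x_j) ≥ λ m (∑ |d_j|^p)^{1/p}`. Pick `m₀` with `λ m₀` close
to `L = sup λ` and a bound `θ` slightly above `L`. Since `λ m < θ` for every `m`, there are
consecutive blocks after `m₀` with unit coefficient sum and norm below `θ`; normalized, their
coefficient sums are at least `θ^{-p}`. Hence every `∑ a_k y_k`, being a vector supported after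
`m₀`, has norm at least `(λ m₀ / θ) (∑ |a_k|^p)^{1/p}`, and `λ m₀ / θ ≥ 1 - ε`.
-/

open Finset

theorem Finset.sum_range_sum_Ioc {M : Type*} [AddCommMonoid M] {m : ℕ → ℕ} (hm : Monotone m)
    (f : ℕ → M) (N : ℕ) :
    ∑ k ∈ range N, ∑ j ∈ Ioc (m k) (m (k + 1)), f j = ∑ j ∈ Ioc (m 0) (m N), f j := by
  induction N with
  | zero => simp
  | succ N ih => rw [sum_range_succ, ih, sum_Ioc_consecutive _ (hm N.zero_le) (hm N.le_succ)]

theorem Monotone.exists_eq_on_Ioc_succ {α : Type*} {m : ℕ → ℕ} (hm : Monotone m)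
    (β : ℕ → ℕ → α) : ∃ b : ℕ → α, ∀ k, ∀ j ∈ Ioc (m k) (m (k + 1)), b j = β k j := by
  classical
  refine ⟨fun j => if h : ∃ k, j ∈ Ioc (m k) (m (k + 1)) then β h.choose j else β 0 j,
    fun k j hj => ?_⟩
  have hex : ∃ k, j ∈ Ioc (m k) (m (k + 1)) := ⟨k, hj⟩
  have hchoose : hex.choose = k := by
    by_contra hne
    exact Set.disjoint_left.1 (hm.pairwise_disjoint_on_Ioc_succ hne)
      (by simpa using hex.choose_spec) (by simpa using hj)
  simp only [dif_pos hex, hchoose]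

theorem exists_strictMono_blocks {α : Type*} (m₀ : ℕ) (P : ℕ → ℕ → (ℕ → α) → Prop)
    (hP : ∀ m M b b', (∀ j ∈ Ioc m M, b j = b' j) → P m M b → P m M b')
    (h : ∀ m, ∃ M b, m < M ∧ P m M b) :
    ∃ (m : ℕ → ℕ) (b : ℕ → α), StrictMono m ∧ m 0 = m₀ ∧ ∀ k, P (m k) (m (k + 1)) b := by
  choose M B hlt hPB using h
  let m : ℕ → ℕ := fun k => Nat.rec m₀ (fun _ mk => M mk) k
  have hm : StrictMono m := strictMono_nat_of_lt_succ fun k => hlt (m k)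
  obtain ⟨b, hb⟩ := hm.monotone.exists_eq_on_Ioc_succ fun k => B (m k)
  exact ⟨m, b, hm, rfl, fun k => hP _ _ _ _ (fun j hj => (hb k j hj).symm) (hPB (m k))⟩

theorem exists_forall_lt_one_sub_mul_le {f : ℕ → ℝ} (hf : BddAbove (Set.range f))
    (hpos : ∀ m, 0 < f m) {ε : ℝ} (hε : 0 < ε) :
    ∃ m₀ θ, (∀ m, f m < θ) ∧ (1 - ε) * θ ≤ f m₀ := by
  set L := ⨆ m, f m
  have hL : 0 < L := (hpos 0).trans_le (le_ciSup hf 0)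
  have hεL : 0 < ε * L := mul_pos hε hL
  -- `(1 - ε) (1 + ε / 2) ≤ 1 - ε / 2`, so `θ = (1 + ε / 2) L` and any `f m₀ > (1 - ε / 2) L` work.
  obtain ⟨m₀, hm₀⟩ := exists_lt_of_lt_ciSup (show L - ε * L / 2 < L by linarith)
  refine ⟨m₀, L + ε * L / 2, fun m => (le_ciSup hf m).trans_lt (by linarith), ?_⟩
  nlinarith [mul_pos hε hεL]

section TailInfimum

variable {X : Type*} [AddCommGroup X] [Module ℝ X] (n : X → ℝ) (p : ℝ) (x : ℕ → X)

def tailUnitNorms (m : ℕ) : Set ℝ :=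
  {t | ∃ (M : ℕ) (b : ℕ → ℝ), ∑ j ∈ Ioc m M, |b j| ^ p = 1 ∧ n (∑ j ∈ Ioc m M, b j • x j) = t}

noncomputable def tailInf (m : ℕ) : ℝ := sInf (tailUnitNorms n p x m)

variable {n p x}

theorem apply_mem_tailUnitNorms (m : ℕ) : n (x (m + 1)) ∈ tailUnitNorms n p x m :=
  ⟨m + 1, fun _ => 1, by simp [Nat.Ioc_succ_singleton], by simp [Nat.Ioc_succ_singleton]⟩

theorem tailUnitNorms_bddBelow (hnn : ∀ v, 0 ≤ n v) (m : ℕ) : BddBelow (tailUnitNorms n p x m) :=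
  ⟨0, by rintro _ ⟨M, b, -, rfl⟩; exact hnn _⟩

theorem tailInf_le (hnn : ∀ v, 0 ≤ n v) (m : ℕ) : tailInf n p x m ≤ n (x (m + 1)) :=
  csInf_le (tailUnitNorms_bddBelow hnn m) (apply_mem_tailUnitNorms m)

theorem le_tailInf {c : ℝ}
    (hlow : ∀ m M (b : ℕ → ℝ),
      c * (∑ j ∈ Ioc m M, |b j| ^ p) ^ (1 / p) ≤ n (∑ j ∈ Ioc m M, b j • x j))
    (m : ℕ) : c ≤ tailInf n p x m :=
  le_csInf ⟨_, apply_mem_tailUnitNorms m⟩ fun _ ⟨M, b, hb, ht⟩ => by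
    simpa [hb, ht] using hlow m M b

theorem exists_Ioc_lt_of_tailInf_lt {m : ℕ} {t : ℝ} (h : tailInf n p x m < t) :
    ∃ (M : ℕ) (b : ℕ → ℝ), m < M ∧ ∑ j ∈ Ioc m M, |b j| ^ p = 1 ∧
      n (∑ j ∈ Ioc m M, b j • x j) < t := by
  obtain ⟨_, ⟨M, b, hb, rfl⟩, hlt⟩ := exists_lt_of_csInf_lt ⟨_, apply_mem_tailUnitNorms m⟩ h
  refine ⟨M, b, ?_, hb, hlt⟩
  by_contra hMm
  simp [Ioc_eq_empty hMm] at hb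

theorem tailInf_mul_rpow_le (hp : p ≠ 0) (hnn : ∀ v, 0 ≤ n v)
    (hhom : ∀ (c : ℝ) v, n (c • v) = |c| * n v) (m M : ℕ) (d : ℕ → ℝ) :
    tailInf n p x m * (∑ j ∈ Ioc m M, |d j| ^ p) ^ (1 / p) ≤ n (∑ j ∈ Ioc m M, d j • x j) := by
  set S := ∑ j ∈ Ioc m M, |d j| ^ p
  rcases (show 0 ≤ S from sum_nonneg fun j _ => by positivity).eq_or_lt with hS | hS
  · rw [← hS, Real.zero_rpow (one_div_ne_zero hp), mul_zero]
    exact hnn _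
  set r := S ^ (1 / p)
  have hr : 0 < r := Real.rpow_pos_of_pos hS _
  have hrp : r ^ p = S := by rw [← Real.rpow_mul hS.le, one_div_mul_cancel hp, Real.rpow_one]
  have hunit : ∑ j ∈ Ioc m M, |d j / r| ^ p = 1 := by
    simp_rw [abs_div, abs_of_pos hr, Real.div_rpow (abs_nonneg _) hr.le, hrp, ← sum_div]
    exact div_self hS.ne'
  have hvec : ∑ j ∈ Ioc m M, d j • x j = r • ∑ j ∈ Ioc m M, (d j / r) • x j := by
    simp_rw [smul_sum, smul_smul, mul_div_cancel₀ _ hr.ne']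
  calc tailInf n p x m * r ≤ n (∑ j ∈ Ioc m M, (d j / r) • x j) * r :=
        mul_le_mul_of_nonneg_right
          (csInf_le (tailUnitNorms_bddBelow hnn m) ⟨M, _, hunit, rfl⟩) hr.le
    _ = n (∑ j ∈ Ioc m M, d j • x j) := by rw [hvec, hhom, abs_of_pos hr, mul_comm]

theorem lower_estimate_Ioc_of_range (hp : p ≠ 0) {c : ℝ}
    (hlow : ∀ N (a : ℕ → ℝ),
      c * (∑ j ∈ range N, |a j| ^ p) ^ (1 / p) ≤ n (∑ j ∈ range N, a j • x j))
    (m M : ℕ) (b : ℕ → ℝ) :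
    c * (∑ j ∈ Ioc m M, |b j| ^ p) ^ (1 / p) ≤ n (∑ j ∈ Ioc m M, b j • x j) := by
  classical
  have hsub : Ioc m M ⊆ range (M + 1) := fun j hj =>
    mem_range.2 (Nat.lt_succ_of_le (mem_Ioc.1 hj).2)
  have := hlow (M + 1) fun j => if j ∈ Ioc m M then b j else 0
  simp_rw [apply_ite (|·| ^ p), ite_smul, abs_zero, Real.zero_rpow hp, zero_smul, sum_ite_mem,
    inter_eq_right.2 hsub] at this
  exact this

theorem exists_normalized_of_lt {s : Finset ℕ} {B : ℕ → ℝ} {θ : ℝ} (hp : 0 ≤ p)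
    (hhom : ∀ (c : ℝ) v, n (c • v) = |c| * n v) (hB : ∑ j ∈ s, |B j| ^ p = 1)
    (hpos : 0 < n (∑ j ∈ s, B j • x j)) (hlt : n (∑ j ∈ s, B j • x j) < θ) :
    ∃ b : ℕ → ℝ, n (∑ j ∈ s, b j • x j) = 1 ∧ (θ ^ p)⁻¹ ≤ ∑ j ∈ s, |b j| ^ p := by
  set r := n (∑ j ∈ s, B j • x j)
  refine ⟨fun j => B j / r, ?_, ?_⟩
  · simp_rw [div_eq_inv_mul, mul_smul, ← smul_sum, hhom, abs_inv, abs_of_pos hpos]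
    exact inv_mul_cancel₀ hpos.ne'
  · simp_rw [abs_div, abs_of_pos hpos, Real.div_rpow (abs_nonneg _) hpos.le, ← sum_div, hB,
      one_div]
    gcongr

theorem exists_normalized_block_of_tailInf_lt (hp : 0 ≤ p) (hnn : ∀ v, 0 ≤ n v)
    (hhom : ∀ (c : ℝ) v, n (c • v) = |c| * n v) {m : ℕ} {θ : ℝ} (hpos : 0 < tailInf n p x m)
    (hlt : tailInf n p x m < θ) :
    ∃ (M : ℕ) (b : ℕ → ℝ), m < M ∧
      n (∑ j ∈ Ioc m M, b j • x j) = 1 ∧ (θ ^ p)⁻¹ ≤ ∑ j ∈ Ioc m M, |b j| ^ p := by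
  obtain ⟨M, B, hmM, hB, hBθ⟩ := exists_Ioc_lt_of_tailInf_lt hlt
  have hBpos : 0 < n (∑ j ∈ Ioc m M, B j • x j) :=
    hpos.trans_le (csInf_le (tailUnitNorms_bddBelow hnn m) ⟨M, B, hB, rfl⟩)
  exact ⟨M, exists_normalized_of_lt hp hhom hB hBpos hBθ |>.imp fun _ h => ⟨hmM, h⟩⟩

theorem lower_estimate_of_blocks (hp : 0 < p) {m : ℕ → ℕ} (hm : Monotone m) {b : ℕ → ℝ}
    {μ θ : ℝ} (hμ : 0 ≤ μ) (hθ : 0 < θ)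
    (htail : ∀ M (d : ℕ → ℝ),
      μ * (∑ j ∈ Ioc (m 0) M, |d j| ^ p) ^ (1 / p) ≤ n (∑ j ∈ Ioc (m 0) M, d j • x j))
    (hb : ∀ k, (θ ^ p)⁻¹ ≤ ∑ j ∈ Ioc (m k) (m (k + 1)), |b j| ^ p) (N : ℕ) (a : ℕ → ℝ) :
    μ / θ * (∑ k ∈ range N, |a k| ^ p) ^ (1 / p) ≤
      n (∑ k ∈ range N, a k • ∑ j ∈ Ioc (m k) (m (k + 1)), b j • x j) := by
  obtain ⟨d, hd⟩ := hm.exists_eq_on_Ioc_succ fun k j => a k * b j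
  have hvec : ∑ k ∈ range N, a k • ∑ j ∈ Ioc (m k) (m (k + 1)), b j • x j =
      ∑ j ∈ Ioc (m 0) (m N), d j • x j := by
    rw [← sum_range_sum_Ioc hm]
    refine sum_congr rfl fun k _ => ?_
    rw [smul_sum]
    exact sum_congr rfl fun j hj => by rw [hd k j hj, mul_smul]
  have hcoeff : (∑ k ∈ range N, |a k| ^ p) / θ ^ p ≤ ∑ j ∈ Ioc (m 0) (m N), |d j| ^ p := by
    rw [← sum_range_sum_Ioc hm, sum_div]
    refine sum_le_sum fun k _ => ?_
    calc |a k| ^ p / θ ^ p = |a k| ^ p * (θ ^ p)⁻¹ := div_eq_mul_inv _ _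
      _ ≤ |a k| ^ p * ∑ j ∈ Ioc (m k) (m (k + 1)), |b j| ^ p := by gcongr; exact hb k
      _ = ∑ j ∈ Ioc (m k) (m (k + 1)), |d j| ^ p := by
        rw [mul_sum]
        exact sum_congr rfl fun j hj => by
          rw [hd k j hj, abs_mul, Real.mul_rpow (abs_nonneg _) (abs_nonneg _)]
  have hsum : 0 ≤ ∑ k ∈ range N, |a k| ^ p := sum_nonneg fun k _ => by positivity
  calc μ / θ * (∑ k ∈ range N, |a k| ^ p) ^ (1 / p)
      = μ * ((∑ k ∈ range N, |a k| ^ p) / θ ^ p) ^ (1 / p) := by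
        rw [Real.div_rpow hsum (by positivity), ← Real.rpow_mul hθ.le,
          mul_one_div_cancel hp.ne', Real.rpow_one]
        ring
    _ ≤ μ * (∑ j ∈ Ioc (m 0) (m N), |d j| ^ p) ^ (1 / p) := by gcongr
    _ ≤ _ := hvec ▸ htail (m N) d

end TailInfimum

theorem stmt_6_general
    (p : ℝ) (hp : 0 < p)
    (X : Type*) [AddCommGroup X] [Module ℝ X]
    (n : X → ℝ)
    (hnn : ∀ v, 0 ≤ n v)
    (hhom : ∀ (c : ℝ) v, n (c • v) = |c| * n v)
    (x : ℕ → X) (hnorm : ∀ j, n (x j) = 1)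
    (c C : ℝ) (hc : 0 < c)
    (hequiv : ∀ (N : ℕ) (a : ℕ → ℝ),
      c * (∑ j ∈ Finset.range N, |a j| ^ p) ^ (1 / p) ≤
          n (∑ j ∈ Finset.range N, a j • x j) ∧
        n (∑ j ∈ Finset.range N, a j • x j) ≤
          C * (∑ j ∈ Finset.range N, |a j| ^ p) ^ (1 / p)) :
    ∀ ε : ℝ, 0 < ε →
      ∃ (m : ℕ → ℕ) (b : ℕ → ℝ) (y : ℕ → X),
        StrictMono m ∧
        (∀ k, y k = ∑ j ∈ Finset.Ioc (m k) (m (k + 1)), b j • x j) ∧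
        (∀ k, n (y k) = 1) ∧
        (∀ (N : ℕ) (a : ℕ → ℝ),
          (1 - ε) * (∑ k ∈ Finset.range N, |a k| ^ p) ^ (1 / p) ≤
            n (∑ k ∈ Finset.range N, a k • y k)) := by
  intro ε hε
  have hlow := lower_estimate_Ioc_of_range hp.ne' fun N a => (hequiv N a).1
  have hpos : ∀ m, 0 < tailInf n p x m := fun m => hc.trans_le (le_tailInf hlow m)
  have hbdd : BddAbove (Set.range (tailInf n p x)) :=
    ⟨1, by rintro _ ⟨m, rfl⟩; exact (tailInf_le hnn m).trans_eq (hnorm _)⟩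
  obtain ⟨m₀, θ, hlt, hθ⟩ := exists_forall_lt_one_sub_mul_le hbdd hpos hε
  have hθpos : 0 < θ := (hpos 0).trans (hlt 0)
  have hblocks := fun m =>
    exists_normalized_block_of_tailInf_lt hp.le hnn hhom (hpos m) (hlt m)
  obtain ⟨m, b, hm, rfl, hmb⟩ := exists_strictMono_blocks m₀ _
    (fun m M b b' hbb' => by
      rw [sum_congr rfl fun j hj => congrArg (· • x j) (hbb' j hj),
        sum_congr rfl fun j hj => congrArg (|·| ^ p) (hbb' j hj)]
      exact id) hblocks
  refine ⟨m, b, _, hm, fun k => rfl, fun k => (hmb k).1, fun N a => ?_⟩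
  calc (1 - ε) * (∑ k ∈ range N, |a k| ^ p) ^ (1 / p)
      ≤ tailInf n p x (m 0) / θ * (∑ k ∈ range N, |a k| ^ p) ^ (1 / p) := by
        gcongr
        exact (le_div_iff₀ hθpos).2 hθ
    _ ≤ _ := lower_estimate_of_blocks hp hm.monotone (hpos _).le hθpos
        (tailInf_mul_rpow_le hp.ne' hnn hhom _) (fun k => (hmb k).2) N a

/-- James's `ℓ_p` distortion theorem for `0 < p ≤ 1`. -/
theorem stmt_6
    (p : ℝ) (hp : 0 < p) (hp1 : p ≤ 1)
    (X : Type*) [AddCommGroup X] [Module ℝ X] [MetricSpace X] [CompleteSpace X]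
    (n : X → ℝ)
    (hnn : ∀ v, 0 ≤ n v)
    (heq : ∀ v, n v = 0 ↔ v = 0)
    (hhom : ∀ (c : ℝ) v, n (c • v) = |c| * n v)
    (htri : ∀ v w, n (v + w) ^ p ≤ n v ^ p + n w ^ p)
    (hdist : ∀ v w : X, dist v w = n (v - w) ^ p)
    (x : ℕ → X) (hnorm : ∀ j, n (x j) = 1)
    (c C : ℝ) (hc : 0 < c) (hC : 0 < C)
    (hequiv : ∀ (N : ℕ) (a : ℕ → ℝ),
      c * (∑ j ∈ Finset.range N, |a j| ^ p) ^ (1 / p) ≤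
          n (∑ j ∈ Finset.range N, a j • x j) ∧
        n (∑ j ∈ Finset.range N, a j • x j) ≤
          C * (∑ j ∈ Finset.range N, |a j| ^ p) ^ (1 / p)) :
    ∀ ε : ℝ, 0 < ε →
      ∃ (m : ℕ → ℕ) (b : ℕ → ℝ) (y : ℕ → X),
        StrictMono m ∧
        (∀ k, y k = ∑ j ∈ Finset.Ioc (m k) (m (k + 1)), b j • x j) ∧
        (∀ k, n (y k) = 1) ∧
        (∀ (N : ℕ) (a : ℕ → ℝ),
          (1 - ε) * (∑ k ∈ Finset.range N, |a k| ^ p) ^ (1 / p) ≤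
            n (∑ k ∈ Finset.range N, a k • y k)) :=
  stmt_6_general p hp X n hnn hhom x hnorm c C hc hequiv
end

section
/- Let $0 < p \le 1$ and let $\{0,1\} \subseteq K_2 \subseteq K_1 \subseteq [0,1]$ with $K_2$ closed. For $x \in K_1 \setminus K_2$, let $a[x], b[x] \in K_2$ be the unique points with $x \in (a[x], b[x])$ and $(a[x], b[x]) \cap K_2 = \emptyset$. Define $f : K_1 \to L_p$-valued (or any $p$-normed space containing point masses $\delta(c)$ for $c \in K_2$ with $\|\delta(c) - \delta(c')\| = |c - c'|$ along $K_2$, and additivity of $p$-th powers of norms over consecutive intervals) via linear interpolation: $f(x) = \frac{b[x]-x}{b[x]-a[x]} \delta(a[x]) + \frac{x-a[x]}{b[x]-a[x]} \delta(b[x])$ for $x \notin K_2$ and $f(x) = \delta(x)$ for $x \in K_2$. Then for all $x < y$ in $K_1$: $\|f(x) - f(y)\|^p \le 3^{1-p} |x - y|^p$. -/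
/-! If no point of `K₂` lies in `[x, y]`, then `x` and `y` lie in one gap, on which `f` is an
affine isometry. Otherwise choose `c ∈ K₂ ∩ [x, y]` and pass from `x` to the nearest point
`x' ∈ K₂` to its right, then to the nearest point `y' ∈ K₂` to the left of `y`, then to `y`.
Each of the three steps is isometric, and the lengths add up to `y - x`. By the `p`-triangle
inequality, `‖f x - f y‖ ^ p` is at most a sum of three `p`-th powers. Concavity of
`t ↦ t ^ p` then bounds that sum by `3 ^ (1 - p) (y - x) ^ p`. -/

open Finset

theorem sum_rpow_le_card_rpow_mul_rpow_sum {ι : Type*} (s : Finset ι) {u : ι → ℝ}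
    (hu : ∀ i ∈ s, 0 ≤ u i) {p : ℝ} (hp₀ : 0 ≤ p) (hp₁ : p ≤ 1) :
    ∑ i ∈ s, u i ^ p ≤ (#s : ℝ) ^ (1 - p) * (∑ i ∈ s, u i) ^ p := by
  rcases s.eq_empty_or_nonempty with rfl | hs
  · simp only [sum_empty, card_empty, Nat.cast_zero]
    positivity
  have hn : (0 : ℝ) < #s := by exact_mod_cast hs.card_pos
  have jensen := (Real.concaveOn_rpow hp₀ hp₁).le_map_sum (t := s) (w := fun _ ↦ (#s : ℝ)⁻¹)
    (p := u) (fun _ _ ↦ by positivity) (by simp [hn.ne']) hu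
  simp only [smul_eq_mul, ← mul_sum] at jensen
  rw [Real.mul_rpow (by positivity) (sum_nonneg hu), Real.inv_rpow hn.le] at jensen
  calc ∑ i ∈ s, u i ^ p ≤ #s * (((#s : ℝ) ^ p)⁻¹ * (∑ i ∈ s, u i) ^ p) :=
        (inv_mul_le_iff₀ hn).1 jensen
    _ = (#s : ℝ) ^ (1 - p) * (∑ i ∈ s, u i) ^ p := by
        rw [Real.rpow_sub hn, Real.rpow_one]
        ring

theorem add_rpow_add_rpow_le {a b c p : ℝ} (ha : 0 ≤ a) (hb : 0 ≤ b) (hc : 0 ≤ c)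
    (hp₀ : 0 ≤ p) (hp₁ : p ≤ 1) :
    a ^ p + b ^ p + c ^ p ≤ 3 ^ (1 - p) * (a + b + c) ^ p := by
  have := sum_rpow_le_card_rpow_mul_rpow_sum univ (u := ![a, b, c])
    (by simp [Fin.forall_fin_succ, ha, hb, hc]) hp₀ hp₁
  simpa [Fin.sum_univ_three, add_assoc] using this

open Set

section PNormed

variable {Y : Type*} [AddCommGroup Y] {nY : Y → ℝ}

theorem rpow_nY_sub_le_add_add {p : ℝ} (hYtri : ∀ v w, nY (v + w) ^ p ≤ nY v ^ p + nY w ^ p)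
    (u v w z : Y) :
    nY (u - z) ^ p ≤ nY (u - v) ^ p + nY (v - w) ^ p + nY (w - z) ^ p :=
  calc nY (u - z) ^ p = nY ((u - v) + ((v - w) + (w - z))) ^ p := by abel_nf
    _ ≤ nY (u - v) ^ p + nY ((v - w) + (w - z)) ^ p := hYtri _ _
    _ ≤ nY (u - v) ^ p + nY (v - w) ^ p + nY (w - z) ^ p := by
      linarith [hYtri (v - w) (w - z)]

variable [Module ℝ Y]

noncomputable def gapInterp (δ : ℝ → Y) (a b x : ℝ) : Y :=
  ((b - x) / (b - a)) • δ a + ((x - a) / (b - a)) • δ b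

theorem gapInterp_left {δ : ℝ → Y} {a b : ℝ} (hab : a ≠ b) : gapInterp δ a b a = δ a := by
  simp [gapInterp, div_self (sub_ne_zero.2 hab.symm)]

theorem gapInterp_right {δ : ℝ → Y} {a b : ℝ} (hab : a ≠ b) : gapInterp δ a b b = δ b := by
  simp [gapInterp, div_self (sub_ne_zero.2 hab.symm)]

theorem nY_gapInterp_sub_gapInterp (hYhom : ∀ (c : ℝ) v, nY (c • v) = |c| * nY v)
    {δ : ℝ → Y} {a b : ℝ} (hab : a ≠ b) (hδab : nY (δ a - δ b) = |a - b|) (x y : ℝ) :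
    nY (gapInterp δ a b x - gapInterp δ a b y) = |x - y| := by
  have hba : b - a ≠ 0 := sub_ne_zero.2 hab.symm
  have hdiff : gapInterp δ a b x - gapInterp δ a b y = ((y - x) / (b - a)) • (δ a - δ b) := by
    simp only [gapInterp, div_eq_mul_inv]
    module
  rw [hdiff, hYhom, hδab, abs_div, abs_sub_comm a b, div_mul_cancel₀ _ (abs_ne_zero.2 hba),
    abs_sub_comm]

end PNormed

section Gaps

variable {K : Set ℝ} {a b c x : ℝ}

theorem le_left_of_Ioo_inter_eq_empty (hgap : Ioo a b ∩ K = ∅) (hc : c ∈ K) (hcx : c < x)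
    (hxb : x < b) : c ≤ a := by
  by_contra! hac
  exact (eq_empty_iff_forall_notMem.1 hgap) c ⟨⟨hac, hcx.trans hxb⟩, hc⟩

theorem right_le_of_Ioo_inter_eq_empty (hgap : Ioo a b ∩ K = ∅) (hc : c ∈ K) (hxc : x < c)
    (hax : a < x) : b ≤ c := by
  by_contra! hcb
  exact (eq_empty_iff_forall_notMem.1 hgap) c ⟨⟨hax.trans hxc, hcb⟩, hc⟩

theorem eq_and_eq_of_mem_Ioo_of_Ioo_inter_eq_empty {a' b' : ℝ} (ha : a ∈ K) (hb : b ∈ K)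
    (ha' : a' ∈ K) (hb' : b' ∈ K) (hgap : Ioo a b ∩ K = ∅) (hgap' : Ioo a' b' ∩ K = ∅)
    (hx : x ∈ Ioo a b) (hx' : x ∈ Ioo a' b') : a = a' ∧ b = b' :=
  ⟨le_antisymm (le_left_of_Ioo_inter_eq_empty hgap' ha hx.1 hx'.2)
      (le_left_of_Ioo_inter_eq_empty hgap ha' hx'.1 hx.2),
    le_antisymm (right_le_of_Ioo_inter_eq_empty hgap hb' hx'.2 hx.1)
      (right_le_of_Ioo_inter_eq_empty hgap' hb hx.2 hx'.1)⟩

end Gaps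

def IsGapEndpoints (K₁ K₂ : Set ℝ) (A B : ℝ → ℝ) : Prop :=
  ∀ x ∈ K₁ \ K₂, A x ∈ K₂ ∧ B x ∈ K₂ ∧ x ∈ Ioo (A x) (B x) ∧ Ioo (A x) (B x) ∩ K₂ = ∅

section Interpolation

variable {Y : Type*} [AddCommGroup Y] [Module ℝ Y] {nY : Y → ℝ} {K₁ K₂ : Set ℝ} {δ f : ℝ → Y}
  {A B : ℝ → ℝ}

theorem nY_gapInterp_sub_gapInterp_of_mem_diff (hYhom : ∀ (c : ℝ) v, nY (c • v) = |c| * nY v)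
    (hδ : ∀ c ∈ K₂, ∀ c' ∈ K₂, nY (δ c - δ c') = |c - c'|)
    (hAB : IsGapEndpoints K₁ K₂ A B)
    {z : ℝ} (hz : z ∈ K₁ \ K₂) (s t : ℝ) :
    nY (gapInterp δ (A z) (B z) s - gapInterp δ (A z) (B z) t) = |s - t| := by
  obtain ⟨hA, hB, hzAB, -⟩ := hAB z hz
  exact nY_gapInterp_sub_gapInterp hYhom (hzAB.1.trans hzAB.2).ne (hδ _ hA _ hB) s t

theorem exists_mem_Icc_nY_sub_δ_eq (hYhom : ∀ (c : ℝ) v, nY (c • v) = |c| * nY v)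
    (hδ : ∀ c ∈ K₂, ∀ c' ∈ K₂, nY (δ c - δ c') = |c - c'|)
    (hAB : IsGapEndpoints K₁ K₂ A B)
    (hf₂ : ∀ x ∈ K₂, f x = δ x) (hf₁ : ∀ x ∈ K₁ \ K₂, f x = gapInterp δ (A x) (B x) x)
    {x c : ℝ} (hx : x ∈ K₁) (hc : c ∈ K₂) (hxc : x ≤ c) :
    ∃ x' ∈ K₂, x' ∈ Icc x c ∧ nY (f x - δ x') = x' - x := by
  by_cases hx₂ : x ∈ K₂
  · exact ⟨x, hx₂, ⟨le_rfl, hxc⟩, by rw [hf₂ x hx₂, hδ x hx₂ x hx₂, sub_self, abs_zero]⟩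
  have hx' : x ∈ K₁ \ K₂ := ⟨hx, hx₂⟩
  obtain ⟨hA, hB, hxAB, hgap⟩ := hAB x hx'
  have hxc' : x < c := hxc.lt_of_ne fun h ↦ hx₂ (h ▸ hc)
  refine ⟨B x, hB, ⟨hxAB.2.le, right_le_of_Ioo_inter_eq_empty hgap hc hxc' hxAB.1⟩, ?_⟩
  rw [hf₁ x hx', ← gapInterp_right (hxAB.1.trans hxAB.2).ne (δ := δ),
    nY_gapInterp_sub_gapInterp_of_mem_diff hYhom hδ hAB hx', abs_sub_comm,
    abs_of_pos (sub_pos.2 hxAB.2)]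

theorem exists_mem_Icc_nY_δ_sub_eq (hYhom : ∀ (c : ℝ) v, nY (c • v) = |c| * nY v)
    (hδ : ∀ c ∈ K₂, ∀ c' ∈ K₂, nY (δ c - δ c') = |c - c'|)
    (hAB : IsGapEndpoints K₁ K₂ A B)
    (hf₂ : ∀ x ∈ K₂, f x = δ x) (hf₁ : ∀ x ∈ K₁ \ K₂, f x = gapInterp δ (A x) (B x) x)
    {y c : ℝ} (hy : y ∈ K₁) (hc : c ∈ K₂) (hcy : c ≤ y) :
    ∃ y' ∈ K₂, y' ∈ Icc c y ∧ nY (δ y' - f y) = y - y' := by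
  by_cases hy₂ : y ∈ K₂
  · exact ⟨y, hy₂, ⟨hcy, le_rfl⟩, by rw [hf₂ y hy₂, hδ y hy₂ y hy₂, sub_self, abs_zero]⟩
  have hy' : y ∈ K₁ \ K₂ := ⟨hy, hy₂⟩
  obtain ⟨hA, hB, hyAB, hgap⟩ := hAB y hy'
  have hcy' : c < y := hcy.lt_of_ne fun h ↦ hy₂ (h ▸ hc)
  refine ⟨A y, hA, ⟨le_left_of_Ioo_inter_eq_empty hgap hc hcy' hyAB.2, hyAB.1.le⟩, ?_⟩
  rw [hf₁ y hy', ← gapInterp_left (hyAB.1.trans hyAB.2).ne (δ := δ),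
    nY_gapInterp_sub_gapInterp_of_mem_diff hYhom hδ hAB hy', abs_sub_comm,
    abs_of_pos (sub_pos.2 hyAB.1)]

theorem nY_sub_eq_of_forall_mem_lt (hYhom : ∀ (c : ℝ) v, nY (c • v) = |c| * nY v)
    (hδ : ∀ c ∈ K₂, ∀ c' ∈ K₂, nY (δ c - δ c') = |c - c'|)
    (hAB : IsGapEndpoints K₁ K₂ A B)
    (hf₁ : ∀ x ∈ K₁ \ K₂, f x = gapInterp δ (A x) (B x) x)
    {x y : ℝ} (hx : x ∈ K₁) (hy : y ∈ K₁) (hxy : x < y) (hK₂ : ∀ c ∈ K₂, x ≤ c → y < c) :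
    nY (f x - f y) = y - x := by
  have hx' : x ∈ K₁ \ K₂ := ⟨hx, fun h ↦ (hK₂ x h le_rfl).not_gt hxy⟩
  have hy' : y ∈ K₁ \ K₂ := ⟨hy, fun h ↦ (hK₂ y h hxy.le).false⟩
  obtain ⟨hAx, hBx, hxAB, hgapx⟩ := hAB x hx'
  obtain ⟨hAy, hBy, hyAB, hgapy⟩ := hAB y hy'
  obtain ⟨hA, hB⟩ := eq_and_eq_of_mem_Ioo_of_Ioo_inter_eq_empty hAx hBx hAy hBy hgapx hgapy
    ⟨hxAB.1.trans hxy, hK₂ _ hBx hxAB.2.le⟩ hyAB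
  rw [hf₁ x hx', hf₁ y hy', hA, hB, nY_gapInterp_sub_gapInterp_of_mem_diff hYhom hδ hAB hy',
    abs_sub_comm, abs_of_pos (sub_pos.2 hxy)]

end Interpolation

theorem stmt_9_general
    (p : ℝ) (hp : 0 < p) (hp1 : p ≤ 1)
    (K₁ K₂ : Set ℝ)
    (Y : Type*) [AddCommGroup Y] [Module ℝ Y]
    (nY : Y → ℝ)
    (hYhom : ∀ (c : ℝ) v, nY (c • v) = |c| * nY v)
    (hYtri : ∀ v w, nY (v + w) ^ p ≤ nY v ^ p + nY w ^ p)
    (δ : ℝ → Y)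
    (hδ : ∀ c ∈ K₂, ∀ c' ∈ K₂, nY (δ c - δ c') = |c - c'|)
    (A B : ℝ → ℝ)
    (hAB : ∀ x ∈ K₁ \ K₂, A x ∈ K₂ ∧ B x ∈ K₂ ∧ x ∈ Set.Ioo (A x) (B x) ∧
      Set.Ioo (A x) (B x) ∩ K₂ = ∅)
    (f : ℝ → Y)
    (hf₂ : ∀ x ∈ K₂, f x = δ x)
    (hf₁ : ∀ x ∈ K₁ \ K₂, f x =
      ((B x - x) / (B x - A x)) • δ (A x) + ((x - A x) / (B x - A x)) • δ (B x)) :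
    ∀ x ∈ K₁, ∀ y ∈ K₁, x < y →
      nY (f x - f y) ^ p ≤ (3 : ℝ) ^ (1 - p) * (y - x) ^ p := by
  intro x hx y hy hxy
  by_cases hK₂ : ∀ c ∈ K₂, x ≤ c → y < c
  · rw [nY_sub_eq_of_forall_mem_lt hYhom hδ hAB hf₁ hx hy hxy hK₂]
    exact le_mul_of_one_le_left (by positivity) (Real.one_le_rpow (by norm_num) (by linarith))
  push Not at hK₂
  obtain ⟨c, hc, hxc, hcy⟩ := hK₂
  obtain ⟨x', hx', ⟨hxx', hx'c⟩, hfx⟩ := exists_mem_Icc_nY_sub_δ_eq hYhom hδ hAB hf₂ hf₁ hx hc hxc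
  obtain ⟨y', hy', ⟨hcy', hy'y⟩, hfy⟩ := exists_mem_Icc_nY_δ_sub_eq hYhom hδ hAB hf₂ hf₁ hy hc hcy
  calc nY (f x - f y) ^ p
      ≤ nY (f x - δ x') ^ p + nY (δ x' - δ y') ^ p + nY (δ y' - f y) ^ p :=
        rpow_nY_sub_le_add_add hYtri _ _ _ _
    _ = (x' - x) ^ p + (y' - x') ^ p + (y - y') ^ p := by
        rw [hfx, hfy, hδ x' hx' y' hy', abs_sub_comm, abs_of_nonneg (by linarith)]
    _ ≤ 3 ^ (1 - p) * ((x' - x) + (y' - x') + (y - y')) ^ p :=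
        add_rpow_add_rpow_le (by linarith) (by linarith) (by linarith) hp.le hp1
    _ = 3 ^ (1 - p) * (y - x) ^ p := by ring_nf

/-- The piecewise-linear interpolation map from `K₁` into a `p`-normed space containing
an isometric copy `δ` of `K₂` satisfies `‖f(x)-f(y)‖^p ≤ 3^{1-p}|x-y|^p`. -/
theorem stmt_9
    (p : ℝ) (hp : 0 < p) (hp1 : p ≤ 1)
    (K₁ K₂ : Set ℝ) (hsub : K₂ ⊆ K₁) (hK₁ : K₁ ⊆ Set.Icc 0 1)
    (h0 : (0 : ℝ) ∈ K₂) (h1 : (1 : ℝ) ∈ K₂) (hK₂closed : IsClosed K₂)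
    (Y : Type*) [AddCommGroup Y] [Module ℝ Y]
    (nY : Y → ℝ)
    (hYnn : ∀ v, 0 ≤ nY v)
    (hYeq : ∀ v, nY v = 0 ↔ v = 0)
    (hYhom : ∀ (c : ℝ) v, nY (c • v) = |c| * nY v)
    (hYtri : ∀ v w, nY (v + w) ^ p ≤ nY v ^ p + nY w ^ p)
    (δ : ℝ → Y)
    (hδ : ∀ c ∈ K₂, ∀ c' ∈ K₂, nY (δ c - δ c') = |c - c'|)
    (A B : ℝ → ℝ)
    (hAB : ∀ x ∈ K₁ \ K₂, A x ∈ K₂ ∧ B x ∈ K₂ ∧ x ∈ Set.Ioo (A x) (B x) ∧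
      Set.Ioo (A x) (B x) ∩ K₂ = ∅)
    (f : ℝ → Y)
    (hf₂ : ∀ x ∈ K₂, f x = δ x)
    (hf₁ : ∀ x ∈ K₁ \ K₂, f x =
      ((B x - x) / (B x - A x)) • δ (A x) + ((x - A x) / (B x - A x)) • δ (B x)) :
    ∀ x ∈ K₁, ∀ y ∈ K₁, x < y →
      nY (f x - f y) ^ p ≤ (3 : ℝ) ^ (1 - p) * (y - x) ^ p :=
  stmt_9_general p hp hp1 K₁ K₂ Y nY hYhom hYtri δ hδ A B hAB f hf₂ hf₁
end

section
/- Let $(\mathcal{M}, d)$ be a $p$-metric space, $0 < p \le 1$, which is $\varepsilon$-separated (i.e., $d(x,y) \ge \varepsilon$ for all distinct $x,y$) for some $\varepsilon > 0$. Let $\mathcal{N} \subseteq \mathcal{M}$ be a net with $\sup_{x \in \mathcal{M}} d(x, \mathcal{N}) \le R$. For each $x \in \mathcal{M} \setminus \mathcal{N}$ choose $z(x) \in \mathcal{N}$ with $d(x, z(x)) \le 2 d(x, \mathcal{N})$, and set $r(x) = z(x)$ for $x \notin \mathcal{N}$, $r(x) = x$ for $x \in \mathcal{N}$. Then $r$ is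 a Lipschitz retraction from $\mathcal{M}$ onto $\mathcal{N}$ with $d^p(r(x), r(y)) \le (1 + 2^{p+1} R^p / \varepsilon^p)\, d^p(x, y)$ for all $x, y \in \mathcal{M}$. -/
/-- The nearest-point-type map onto a net in a uniformly separated `p`-metric space
is a Lipschitz retraction with the stated constant. -/
theorem stmt_11
    (p : ℝ) (hp : 0 < p) (hp1 : p ≤ 1)
    (M : Type*) (d : M → M → ℝ)
    (hnn : ∀ x y, 0 ≤ d x y)
    (hsymm : ∀ x y, d x y = d y x)
    (heq : ∀ x y, d x y = 0 ↔ x = y)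
    (htri : ∀ x y z, d x z ^ p ≤ d x y ^ p + d y z ^ p)
    (ε R : ℝ) (hε : 0 < ε)
    (hsep : ∀ x y : M, x ≠ y → ε ≤ d x y)
    (N : Set M) (hN : N.Nonempty)
    (hR : ∀ x : M, (⨅ z : N, d x (z : M)) ≤ R)
    (r : M → M)
    (hrfix : ∀ x ∈ N, r x = x)
    (hrnear : ∀ x ∉ N, r x ∈ N ∧ d x (r x) ≤ 2 * ⨅ z : N, d x (z : M)) :
    (∀ x, r x ∈ N) ∧
    (∀ x y, d (r x) (r y) ^ p ≤
      (1 + (2 : ℝ) ^ (p + 1) * R ^ p / ε ^ p) * d x y ^ p) := by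
  obtain ⟨x0, hx0⟩ := hN
  have hRnn : 0 ≤ R :=
    le_trans (Real.iInf_nonneg fun z : N => hnn x0 (z : M)) (hR x0)
  have hmem : ∀ x, r x ∈ N := by
    intro x
    by_cases hx : x ∈ N
    · rw [hrfix x hx]; exact hx
    · exact (hrnear x hx).1
  refine ⟨hmem, ?_⟩
  have h2Rnn : (0:ℝ) ≤ 2 ^ p * R ^ p :=
    mul_nonneg (Real.rpow_nonneg (by norm_num) p) (Real.rpow_nonneg hRnn p)
  have hdr : ∀ x : M, d x (r x) ^ p ≤ 2 ^ p * R ^ p := by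
    intro x
    by_cases hx : x ∈ N
    · rw [hrfix x hx, (heq x x).2 rfl, Real.zero_rpow hp.ne']
      exact h2Rnn
    · have h1 : d x (r x) ≤ 2 * R := by
        refine le_trans (hrnear x hx).2 ?_
        have := hR x
        linarith
      calc d x (r x) ^ p ≤ (2 * R) ^ p := Real.rpow_le_rpow (hnn _ _) h1 hp.le
        _ = 2 ^ p * R ^ p := Real.mul_rpow (by norm_num) hRnn
  intro x y
  by_cases hxy : x = y
  · subst hxy
    rw [(heq (r x) (r x)).2 rfl, (heq x x).2 rfl, Real.zero_rpow hp.ne', mul_zero]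
  · have hεd : ε ^ p ≤ d x y ^ p := Real.rpow_le_rpow hε.le (hsep x y hxy) hp.le
    have htri2 : d (r x) (r y) ^ p ≤ d x (r x) ^ p + d x y ^ p + d y (r y) ^ p := by
      calc d (r x) (r y) ^ p ≤ d (r x) x ^ p + d x (r y) ^ p := htri _ _ _
        _ ≤ d (r x) x ^ p + (d x y ^ p + d y (r y) ^ p) := by
            linarith [htri x y (r y)]
        _ = d x (r x) ^ p + d x y ^ p + d y (r y) ^ p := by rw [hsymm (r x) x]; ring
    have hεp : 0 < ε ^ p := Real.rpow_pos_of_pos hε p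
    have h2 : (2:ℝ) ^ (p+1) = 2 * 2 ^ p := by
      rw [Real.rpow_add (by norm_num), Real.rpow_one]; ring
    have key : 2 ^ p * R ^ p + 2 ^ p * R ^ p ≤ (2:ℝ) ^ (p+1) * R ^ p / ε ^ p * d x y ^ p := by
      have hc : (0:ℝ) ≤ (2:ℝ) ^ (p+1) * R ^ p / ε ^ p := by
        apply div_nonneg _ hεp.le
        rw [h2]
        linarith
      have hm := mul_le_mul_of_nonneg_left hεd hc
      calc 2 ^ p * R ^ p + 2 ^ p * R ^ p
          = (2:ℝ) ^ (p+1) * R ^ p / ε ^ p * ε ^ p := by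
            rw [div_mul_cancel₀ _ hεp.ne', h2]; ring
        _ ≤ _ := hm
    have := hdr x
    have := hdr y
    nlinarith [hεd, htri2]
end

section
/- Let $0 < p \le 1$ and let $(\mathcal{M}, d)$ be a $p$-metric space. Fix $t > 1$ and choose $0 < s < 1$ with $\sqrt{t} = (1+s)/(1-s)$. Suppose $(x_n)_{n \ge 0}$ is a sequence in $\mathcal{M}$ (with all $x_n$ distinct from $x_0$ for $n \ge 1$) such that $d(x_n, x_0) / d(x_{n+1}, x_0) < s^{1/p}$ for all $n \ge 1$. Set $r_n = t^{-1/2} d^p(x_n, x_0)$ for $n \ge 1$ and $r_0 = 0$. Then for all distinct $m, n \in \mathbb{N} \cup \{0\}$: $r_n + r_m \le \sqrt{t}\,|r_n - r_m|$, $d^p(x_n, x_m) \ge r_n + r_m$, and $d^p(x_n, x_m) \le t |r_n - r_m|$. -/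
/-!
Write `Dₙ = d(xₙ, x₀)ᵖ` and `q = √t`, so that `rₙ = Dₙ / q` (also for `n = 0`, where `D₀ = 0`).
The ratio hypothesis says `Dₙ < s Dₙ₊₁`, hence `Dₘ ≤ s Dₙ` whenever `m < n`, and since
`s = (q - 1) / (q + 1)` this is exactly `Dₘ + Dₙ ≤ q (Dₙ - Dₘ)`, the first estimate times `q`.
As `dᵖ` satisfies the triangle inequality, `|Dₙ - Dₘ| ≤ dᵖ(xₙ, xₘ) ≤ Dₙ + Dₘ`,
and the other two estimates follow by multiplying the first one by `q` on either side.
-/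

lemma rpow_lt_mul_rpow_of_div_lt {a b s p : ℝ} (ha : 0 ≤ a) (hb : 0 < b) (hs : 0 ≤ s)
    (hp : 0 < p) (h : a / b < s ^ (1 / p)) : a ^ p < s * b ^ p := by
  have := Real.rpow_lt_rpow (div_nonneg ha hb.le) h hp
  rwa [Real.div_rpow ha hb.le, ← Real.rpow_mul hs, one_div_mul_cancel hp.ne', Real.rpow_one,
    div_lt_iff₀ (by positivity)] at this

lemma le_mul_of_forall_lt_mul_succ {D : ℕ → ℝ} {s : ℝ} (hs0 : 0 ≤ s) (hs1 : s ≤ 1)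
    (hD : ∀ n, 1 ≤ n → 0 ≤ D n) (hstep : ∀ n, 1 ≤ n → D n < s * D (n + 1))
    {m n : ℕ} (hm : 1 ≤ m) (hmn : m < n) : D m ≤ s * D n := by
  induction n, hmn using Nat.le_induction with
  | base => exact (hstep m hm).le
  | succ k hk ih =>
    have hk1 : 1 ≤ k := by omega
    have hmono : D k ≤ D (k + 1) :=
      ((hstep k hk1).trans_le (mul_le_of_le_one_left (hD _ (by omega)) hs1)).le
    exact ih.trans (mul_le_mul_of_nonneg_left hmono hs0)

lemma add_le_mul_sub_of_le_mul {a b s q : ℝ} (hs1 : s < 1) (hq : q * (1 - s) = 1 + s)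
    (hab : a ≤ s * b) : a + b ≤ q * (b - a) := by
  have key : (1 - s) * (q * (b - a) - (a + b)) = 2 * (s * b - a) := by
    linear_combination (b - a) * hq
  nlinarith [sub_pos.2 hs1]

lemma add_le_mul_abs_sub_of_le_mul {D : ℕ → ℝ} {s q : ℝ} (hs1 : s < 1)
    (hq : q * (1 - s) = 1 + s) (hq0 : 0 ≤ q) (hD : ∀ k l, k < l → D k ≤ s * D l)
    {m n : ℕ} (hmn : m ≠ n) : D n + D m ≤ q * |D n - D m| := by
  rcases hmn.lt_or_gt with h | h
  · rw [add_comm]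
    exact (add_le_mul_sub_of_le_mul hs1 hq (hD _ _ h)).trans (by gcongr; exact le_abs_self _)
  · rw [abs_sub_comm]
    exact (add_le_mul_sub_of_le_mul hs1 hq (hD _ _ h)).trans (by gcongr; exact le_abs_self _)

lemma abs_sub_le_of_triangle {M : Type*} {ρ : M → M → ℝ} (hsymm : ∀ x y, ρ x y = ρ y x)
    (htri : ∀ x y z, ρ x z ≤ ρ x y + ρ y z) (x y z : M) : |ρ x z - ρ y z| ≤ ρ x y := by
  rw [abs_sub_le_iff]
  constructor
  · linarith [htri x y z]
  · linarith [htri y x z, hsymm x y]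

lemma rpow_dist_le_mul_rpow_dist {p s : ℝ} (hp : 0 < p) (hs0 : 0 ≤ s) (hs1 : s ≤ 1)
    {M : Type*} {d : M → M → ℝ} (hnn : ∀ x y, 0 ≤ d x y) (heq : ∀ x y, d x y = 0 ↔ x = y)
    {x : ℕ → M} (hne : ∀ n, 1 ≤ n → x n ≠ x 0)
    (hratio : ∀ n, 1 ≤ n → d (x n) (x 0) / d (x (n + 1)) (x 0) < s ^ (1 / p))
    {m n : ℕ} (hmn : m < n) : d (x m) (x 0) ^ p ≤ s * d (x n) (x 0) ^ p := by
  have hpos : ∀ n, 1 ≤ n → 0 < d (x n) (x 0) := fun n hn =>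
    (hnn _ _).lt_of_ne fun h => hne n hn ((heq _ _).mp h.symm)
  rcases Nat.eq_zero_or_pos m with rfl | hm
  · rw [(heq _ _).mpr rfl, Real.zero_rpow hp.ne']
    exact mul_nonneg hs0 (Real.rpow_nonneg (hnn _ _) p)
  · refine le_mul_of_forall_lt_mul_succ hs0 hs1 (fun k _ => Real.rpow_nonneg (hnn _ _) p)
      (fun k hk => ?_) hm hmn
    exact rpow_lt_mul_rpow_of_div_lt (hnn _ _) (hpos _ (by omega)) hs0 hp (hratio k hk)

lemma separation_estimates_of_div {q t Dm Dn δ rm rn : ℝ} (hq : 0 < q) (hqt : q * q = t)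
    (hrm : rm = Dm / q) (hrn : rn = Dn / q) (hsep : Dn + Dm ≤ q * |Dn - Dm|)
    (hlow : |Dn - Dm| ≤ δ) (hup : δ ≤ Dn + Dm) :
    rn + rm ≤ q * |rn - rm| ∧ rn + rm ≤ δ ∧ δ ≤ t * |rn - rm| := by
  have hsum : rn + rm = (Dn + Dm) / q := by rw [hrn, hrm, add_div]
  have hdiff : q * |rn - rm| = |Dn - Dm| := by
    rw [hrn, hrm, ← sub_div, abs_div, abs_of_pos hq, mul_div_cancel₀ _ hq.ne']
  have hfirst : rn + rm ≤ q * |rn - rm| := by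
    rw [hsum, hdiff, div_le_iff₀ hq, mul_comm]
    exact hsep
  refine ⟨hfirst, hfirst.trans (hdiff ▸ hlow), ?_⟩
  calc δ ≤ Dn + Dm := hup
    _ = q * (rn + rm) := by rw [hsum, mul_div_cancel₀ _ hq.ne']
    _ ≤ q * (q * |rn - rm|) := mul_le_mul_of_nonneg_left hfirst hq.le
    _ = t * |rn - rm| := by rw [← hqt, mul_assoc]

theorem stmt_13_general
    (p : ℝ) (hp : 0 < p)
    (M : Type*) (d : M → M → ℝ)
    (hnn : ∀ x y, 0 ≤ d x y)
    (hsymm : ∀ x y, d x y = d y x)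
    (heq : ∀ x y, d x y = 0 ↔ x = y)
    (htri : ∀ x y z, d x z ^ p ≤ d x y ^ p + d y z ^ p)
    (t s : ℝ) (hs0 : 0 < s) (hs1 : s < 1)
    (hst : Real.sqrt t = (1 + s) / (1 - s))
    (x : ℕ → M)
    (hne : ∀ n, 1 ≤ n → x n ≠ x 0)
    (hratio : ∀ n, 1 ≤ n → d (x n) (x 0) / d (x (n + 1)) (x 0) < s ^ (1 / p))
    (r : ℕ → ℝ) (hr0 : r 0 = 0)
    (hrdef : ∀ n, 1 ≤ n → r n = t ^ (-(1 : ℝ) / 2) * d (x n) (x 0) ^ p) :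
    ∀ m n : ℕ, m ≠ n →
      r n + r m ≤ Real.sqrt t * |r n - r m| ∧
      r n + r m ≤ d (x n) (x m) ^ p ∧
      d (x n) (x m) ^ p ≤ t * |r n - r m| := by
  intro m n hmn
  have hq0 : 0 < Real.sqrt t := hst ▸ div_pos (by linarith) (by linarith)
  have ht0 : 0 < t := Real.sqrt_pos.mp hq0
  have hq : Real.sqrt t * (1 - s) = 1 + s := by
    rw [hst, div_mul_cancel₀ _ (by linarith)]
  have hr : ∀ k, r k = d (x k) (x 0) ^ p / Real.sqrt t := by
    intro k
    rcases Nat.eq_zero_or_pos k with rfl | hk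
    · rw [hr0, (heq _ _).mpr rfl, Real.zero_rpow hp.ne', zero_div]
    · rw [hrdef k hk, neg_div, Real.rpow_neg ht0.le, ← Real.sqrt_eq_rpow, inv_mul_eq_div]
  have hsep := add_le_mul_abs_sub_of_le_mul hs1 hq hq0.le
    (fun k l hkl => rpow_dist_le_mul_rpow_dist hp hs0.le hs1.le hnn heq hne hratio hkl) hmn
  have hρsymm : ∀ a b, d a b ^ p = d b a ^ p := fun a b => by rw [hsymm]
  refine separation_estimates_of_div hq0 (Real.mul_self_sqrt ht0.le) (hr m) (hr n) hsep
    (abs_sub_le_of_triangle hρsymm htri _ _ _) ?_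
  rw [hρsymm (x m)]
  exact htri _ _ _

/-- Quantitative separation estimates for a rapidly escaping (or converging) sequence in
a `p`-metric space (Lemma 3.8 of the paper). -/
theorem stmt_13
    (p : ℝ) (hp : 0 < p) (hp1 : p ≤ 1)
    (M : Type*) (d : M → M → ℝ)
    (hnn : ∀ x y, 0 ≤ d x y)
    (hsymm : ∀ x y, d x y = d y x)
    (heq : ∀ x y, d x y = 0 ↔ x = y)
    (htri : ∀ x y z, d x z ^ p ≤ d x y ^ p + d y z ^ p)
    (t s : ℝ) (ht : 1 < t) (hs0 : 0 < s) (hs1 : s < 1)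
    (hst : Real.sqrt t = (1 + s) / (1 - s))
    (x : ℕ → M)
    (hne : ∀ n, 1 ≤ n → x n ≠ x 0)
    (hratio : ∀ n, 1 ≤ n → d (x n) (x 0) / d (x (n + 1)) (x 0) < s ^ (1 / p))
    (r : ℕ → ℝ) (hr0 : r 0 = 0)
    (hrdef : ∀ n, 1 ≤ n → r n = t ^ (-(1 : ℝ) / 2) * d (x n) (x 0) ^ p) :
    ∀ m n : ℕ, m ≠ n →
      r n + r m ≤ Real.sqrt t * |r n - r m| ∧
      r n + r m ≤ d (x n) (x m) ^ p ∧
      d (x n) (x m) ^ p ≤ t * |r n - r m| :=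
  stmt_13_general p hp M d hnn hsymm heq htri t s hs0 hs1 hst x hne hratio r hr0 hrdef
end
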